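/- arXiv:1104.1808 — 6 statements merged into one kernel-verified Lean document; each statement's English description precedes it below -/
import Mathlib

section
/- Let p be a differentiable, positive, strictly increasing function on ℝ₊ and let S be an absolutely continuous nonnegative function satisfying S'(t) + p(S(t)) ≤ 0 for all t ≥ 0, with S(0) > 0. Define ψ(x) = ∫ₓ^{S(0)} ds / p(s) for x ∈ (0, S(0)], which is strictly decreasing with ψ(x) → ∞ as x → 0⁺. Then S(t) ≤ ψ⁻¹(t) for every t ≥ 0. -/
/-! Since `ψ' = -1/p`, the inequality `S' ≤ -p(S)` gives `(ψ ∘ S)' ≥ 1`, hence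
`ψ (S t) ≥ ψ (S 0) + t = t = ψ (ψ⁻¹ t)`, and `ψ` decreasing forces `S t ≤ ψ⁻¹ t`.
Differentiating `ψ ∘ S` needs `S` to stay in `(0, S 0]` up to time `t`: it cannot drop to `0`
if `S t > ψ⁻¹ t > 0`, and it is nonincreasing because `p ≥ 0` on `[0, ∞)` by continuity. -/

open MeasureTheory Set

lemma nonneg_of_pos_of_continuousWithinAt_Ici {f : ℝ → ℝ} {a : ℝ}
    (hf : ContinuousWithinAt f (Ici a) a) (hpos : ∀ x > a, 0 < f x) : ∀ x ≥ a, 0 ≤ f x := by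
  intro x hx
  rcases hx.eq_or_lt with rfl | hx
  · exact ge_of_tendsto (hf.mono Ioi_subset_Ici_self)
      (eventually_mem_nhdsWithin.mono fun y hy => (hpos y hy).le)
  · exact (hpos x hx).le

lemma antitoneOn_Ici_of_hasDerivAt_nonpos {f f' : ℝ → ℝ} {a : ℝ}
    (hf : ∀ t ≥ a, HasDerivAt f (f' t) t) (hf' : ∀ t > a, f' t ≤ 0) : AntitoneOn f (Ici a) := by
  refine antitoneOn_of_hasDerivWithinAt_nonpos (f' := f') (convex_Ici a)
    (fun t ht => (hf t ht).continuousAt.continuousWithinAt) (fun t ht => ?_) (fun t ht => ?_)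
  · rw [interior_Ici] at ht
    exact (hf t ht.le).hasDerivWithinAt
  · rw [interior_Ici] at ht
    exact hf' t ht

lemma hasDerivAt_intervalIntegral_left {f : ℝ → ℝ} {U : Set ℝ} {x b : ℝ} (hU : IsOpen U)
    (hf : ContinuousOn f U) (hxb : uIcc x b ⊆ U) :
    HasDerivAt (fun y => ∫ s in y..b, f s) (-f x) x := by
  have hx : x ∈ U := hxb left_mem_uIcc
  exact intervalIntegral.integral_hasDerivAt_left ((hf.mono hxb).intervalIntegrable)
    (hf.stronglyMeasurableAtFilter hU x hx) (hf.continuousAt (hU.mem_nhds hx))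

lemma sub_le_comp_sub_comp_of_hasDerivAt_add_le {p S S' ψ : ℝ → ℝ} {a b : ℝ} (hab : a ≤ b)
    (hS : ∀ u ∈ Icc a b, HasDerivAt S (S' u) u)
    (hψ : ∀ u ∈ Icc a b, HasDerivAt ψ (-(1 / p (S u))) (S u))
    (hp : ∀ u ∈ Icc a b, 0 < p (S u)) (hineq : ∀ u ∈ Icc a b, S' u + p (S u) ≤ 0) :
    b - a ≤ ψ (S b) - ψ (S a) := by
  have hder : ∀ u ∈ Icc a b,
      HasDerivAt (fun u => ψ (S u) - u) (-(1 / p (S u)) * S' u - 1) u :=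
    fun u hu => ((hψ u hu).comp u (hS u hu)).sub (hasDerivAt_id u)
  have hmono : MonotoneOn (fun u => ψ (S u) - u) (Icc a b) := by
    refine monotoneOn_of_hasDerivWithinAt_nonneg (convex_Icc a b)
      (fun u hu => (hder u hu).continuousAt.continuousWithinAt)
      (fun u hu => (hder u (interior_subset hu)).hasDerivWithinAt) (fun u hu => ?_)
    have hu := interior_subset hu
    have h1 : 1 ≤ -S' u / p (S u) := (one_le_div (hp u hu)).2 (by linarith [hineq u hu])
    calc (0 : ℝ) ≤ -S' u / p (S u) - 1 := by linarith
      _ = -(1 / p (S u)) * S' u - 1 := by ring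
  have := hmono (left_mem_Icc.2 hab) (right_mem_Icc.2 hab) hab
  simp only at this
  linarith

theorem stmt_1_general
    (p : ℝ → ℝ) (hpdiff : DifferentiableOn ℝ p (Ici 0))
    (hppos : ∀ x > (0:ℝ), 0 < p x)
    (S S' : ℝ → ℝ) (hSnn : ∀ t ≥ (0:ℝ), 0 ≤ S t)
    (hSder : ∀ t ≥ (0:ℝ), HasDerivAt S (S' t) t)
    (hSineq : ∀ t ≥ (0:ℝ), S' t + p (S t) ≤ 0)
    (ψ : ℝ → ℝ) (hψ : ∀ x, ψ x = ∫ s in x..(S 0), 1 / p s)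
    (hψdecr : StrictAntiOn ψ (Ioc 0 (S 0)))
    (ψinv : ℝ → ℝ)
    (hψinv : ∀ t ≥ (0:ℝ), ψinv t ∈ Ioc 0 (S 0) ∧ ψ (ψinv t) = t) :
    ∀ t ≥ (0:ℝ), S t ≤ ψinv t := by
  intro t ht
  by_contra! hlt
  obtain ⟨hmem, hψt⟩ := hψinv t ht
  have hp0 := nonneg_of_pos_of_continuousWithinAt_Ici (hpdiff.continuousOn 0 self_mem_Ici) hppos
  have hSanti : AntitoneOn S (Ici 0) := antitoneOn_Ici_of_hasDerivAt_nonpos hSder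
    fun u hu => by linarith [hSineq u hu.le, hp0 _ (hSnn u hu.le)]
  have hSmem : ∀ u ∈ Icc 0 t, S u ∈ Ioc 0 (S 0) := fun u hu =>
    ⟨hmem.1.trans (hlt.trans_le (hSanti hu.1 ht hu.2)), hSanti self_mem_Ici hu.1 hu.1⟩
  have hinv_cont : ContinuousOn (fun s => 1 / p s) (Ioi 0) :=
    continuousOn_const.div (hpdiff.continuousOn.mono Ioi_subset_Ici_self) fun x hx => (hppos x hx).ne'
  have hψder : ∀ x ∈ Ioc 0 (S 0), HasDerivAt ψ (-(1 / p x)) x := fun x hx => by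
    rw [funext hψ]
    exact hasDerivAt_intervalIntegral_left isOpen_Ioi hinv_cont
      (by rw [uIcc_of_le hx.2]; exact fun y hy => hx.1.trans_le hy.1)
  have hgrowth := sub_le_comp_sub_comp_of_hasDerivAt_add_le ht (fun u hu => hSder u hu.1)
    (fun u hu => hψder _ (hSmem u hu)) (fun u hu => hppos _ (hSmem u hu).1)
    (fun u hu => hSineq u hu.1)
  have hψS0 : ψ (S 0) = 0 := by rw [hψ, intervalIntegral.integral_same]
  have := hψdecr hmem (hSmem t ⟨ht, le_rfl⟩) hlt
  linarith

/-- Unforced decay: if S' + p(S) ≤ 0 then S(t) ≤ ψ⁻¹(t) where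
ψ(x) = ∫ₓ^{S(0)} ds / p(s). -/
theorem stmt_1
    (p : ℝ → ℝ) (hpdiff : DifferentiableOn ℝ p (Ici 0))
    (hppos : ∀ x > (0:ℝ), 0 < p x) (hpmono : StrictMonoOn p (Ici 0))
    (S S' : ℝ → ℝ) (hSnn : ∀ t ≥ (0:ℝ), 0 ≤ S t) (hS0 : 0 < S 0)
    (hSder : ∀ t ≥ (0:ℝ), HasDerivAt S (S' t) t)
    (hSineq : ∀ t ≥ (0:ℝ), S' t + p (S t) ≤ 0)
    (ψ : ℝ → ℝ) (hψ : ∀ x, ψ x = ∫ s in x..(S 0), 1 / p s)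
    (hψdecr : StrictAntiOn ψ (Ioc 0 (S 0)))
    (hψlim : Filter.Tendsto ψ (nhdsWithin 0 (Ioi 0)) Filter.atTop)
    (ψinv : ℝ → ℝ)
    (hψinv : ∀ t ≥ (0:ℝ), ψinv t ∈ Ioc 0 (S 0) ∧ ψ (ψinv t) = t) :
    ∀ t ≥ (0:ℝ), S t ≤ ψinv t :=
  stmt_1_general p hpdiff hppos S S' hSnn hSder hSineq ψ hψ hψdecr ψinv hψinv
end

section
/- Let p be a differentiable, positive, strictly increasing function on ℝ₊ such that p(x) ≤ m₁ x for x ∈ [0, η] (some m₁ > 0, 0 < η ≪ 1) and such that p(Kx) ≥ m·p(K)·p(x) for some m > 0, all K ≥ 1 and all x ≥ 0. Let Γ ∈ C¹(ℝ₊) be positive, and suppose S satisfies S'(t) + p(S(t)) ≤ Γ(t), S(0) ≥ 0. Assume there exist c > 0 and κ ≥ 1 such that (d/dt)(p⁻¹(Γ(t))) + c·Γ(t) < 0 for all t ≥ 0, m·p(κ) − κ·c − 1 ≥ 0, and κ·p⁻¹(Γ(0)) ≥ S(0). Define ψ(x) = ∫ₓ^{p⁻¹(Γ(0))} ds/p(s).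 Then S(t) ≤ κ·ψ⁻¹(c t) for all t ≥ 0. -/
open MeasureTheory Set Filter Topology

/-!
Let `Y t = ψ⁻¹(c t)`. Since `ψ' = -1/p`, `Y` solves `Y' = -c p(Y)` with `Y 0 = p⁻¹(Γ 0)`, and both
estimates are comparisons at a first touching time. The forcing profile `p⁻¹ ∘ Γ` starts at `Y 0`
and, by `(p⁻¹ ∘ Γ)' < -c Γ`, falls strictly faster than `Y` wherever the two meet; hence
`p⁻¹ ∘ Γ ≤ Y`, i.e. `Γ ≤ p(Y)`. Wherever `S` touches `κ Y + ε`, homogeneity gives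
`p(S) ≥ m p(κ) p(S/κ)` with `S/κ > Y`, so `S' ≤ Γ - p(S) < (1 - m p(κ)) p(S/κ) ≤ -κ c p(Y) = κ Y'`
by `m p(κ) - κ c ≥ 1`. Thus `S ≤ κ Y + ε` for every `ε > 0`.
-/

theorem StrictAntiOn.continuousOn_of_leftInvOn {α β : Type*} [LinearOrder α] [TopologicalSpace α]
    [OrderTopology α] [LinearOrder β] [TopologicalSpace β] [OrderTopology β]
    {f : α → β} {g : β → α} {I : Set α} {s : Set β} (hf : StrictAntiOn f I) (hI : I.OrdConnected)
    (hg : MapsTo g s I) (hfg : LeftInvOn f g s) : ContinuousOn g s := by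
  intro y hy
  rw [ContinuousWithinAt, tendsto_order]
  constructor
  · intro a ha
    by_cases haI : a ∈ I
    · have hlt : y < f a := hfg hy ▸ hf haI (hg hy) ha
      filter_upwards [self_mem_nhdsWithin, nhdsWithin_le_nhds (Iio_mem_nhds hlt)] with z hz hza
      by_contra! hle
      exact (hfg hz ▸ hf.antitoneOn (hg hz) haI hle).not_gt hza
    · filter_upwards [self_mem_nhdsWithin] with z hz
      by_contra! hle
      exact haI (hI.out (hg hz) (hg hy) ⟨hle, ha.le⟩)
  · intro a ha
    by_cases haI : a ∈ I
    · have hlt : f a < y := hfg hy ▸ hf (hg hy) haI ha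
      filter_upwards [self_mem_nhdsWithin, nhdsWithin_le_nhds (Ioi_mem_nhds hlt)] with z hz hza
      by_contra! hle
      exact (hfg hz ▸ hf.antitoneOn haI (hg hz) hle).not_gt hza
    · filter_upwards [self_mem_nhdsWithin] with z hz
      by_contra! hle
      exact haI (hI.out (hg hy) (hg hz) ⟨ha.le, hle⟩)

theorem HasDerivAt.hasDerivWithinAt_of_leftInvOn {𝕜 : Type*} [NontriviallyNormedField 𝕜]
    {f g : 𝕜 → 𝕜} {f' a : 𝕜} {s : Set 𝕜} (hg : ContinuousWithinAt g s a)
    (hf : HasDerivAt f f' (g a)) (hf' : f' ≠ 0) (ha : a ∈ s) (hfg : LeftInvOn f g s) :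
    HasDerivWithinAt g f'⁻¹ s a :=
  HasFDerivWithinAt.of_local_left_inverse (t := univ) (by simpa using hg.tendsto)
    (hf.hasFDerivAt_equiv hf').hasFDerivWithinAt ha (eventually_mem_nhdsWithin.mono hfg)

theorem hasDerivAt_integral_left_of_continuousOn {E : Type*} [NormedAddCommGroup E]
    [NormedSpace ℝ E] [CompleteSpace E] {f : ℝ → E} {U : Set ℝ} {a b : ℝ} (hU : IsOpen U)
    (hUc : U.OrdConnected) (hf : ContinuousOn f U) (ha : a ∈ U) (hb : b ∈ U) :
    HasDerivAt (fun u => ∫ x in u..b, f x) (-f a) a :=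
  intervalIntegral.integral_hasDerivAt_left ((hf.mono (hUc.uIcc_subset ha hb)).intervalIntegrable)
    (hf.stronglyMeasurableAtFilter hU a ha) (hf.continuousAt (hU.mem_nhds ha))

theorem image_le_of_deriv_right_lt_deriv_boundary_Ici {f f' B B' : ℝ → ℝ} {a : ℝ}
    (hf : ∀ x ∈ Ici a, HasDerivWithinAt f (f' x) (Ici a) x)
    (hB : ∀ x ∈ Ici a, HasDerivWithinAt B (B' x) (Ici a) x) (ha : f a ≤ B a)
    (bound : ∀ x ∈ Ici a, f x = B x → f' x < B' x) : ∀ x ∈ Ici a, f x ≤ B x := by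
  intro x hx
  have hsub : Icc a x ⊆ Ici a := Icc_subset_Ici_self
  refine image_le_of_deriv_right_lt_deriv_boundary'
    (fun y hy => (hf y (hsub hy)).continuousWithinAt.mono hsub)
    (fun y hy => (hf y hy.1).mono (Ici_subset_Ici.2 hy.1)) ha
    (fun y hy => (hB y (hsub hy)).continuousWithinAt.mono hsub)
    (fun y hy => (hB y hy.1).mono (Ici_subset_Ici.2 hy.1))
    (fun y hy => bound y hy.1) ⟨hx, le_rfl⟩

section Profile

variable {p ψ ψinv : ℝ → ℝ} {b : ℝ}

theorem hasDerivAt_of_eq_integral_inv (hp : ContinuousOn p (Ioi 0)) (hppos : ∀ x > 0, 0 < p x)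
    (hb : 0 < b) (hψ : ∀ x, ψ x = ∫ s in x..b, 1 / p s) {x : ℝ} (hx : 0 < x) :
    HasDerivAt ψ (-(1 / p x)) x := by
  rw [show ψ = fun x => ∫ s in x..b, 1 / p s from funext hψ]
  exact hasDerivAt_integral_left_of_continuousOn isOpen_Ioi ordConnected_Ioi
    (continuousOn_const.div hp fun y hy => (hppos y hy).ne') hx hb

theorem strictAntiOn_of_eq_integral_inv (hp : ContinuousOn p (Ioi 0))
    (hppos : ∀ x > 0, 0 < p x) (hb : 0 < b) (hψ : ∀ x, ψ x = ∫ s in x..b, 1 / p s) :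
    StrictAntiOn ψ (Ioi 0) := by
  have hψ' := fun x (hx : x ∈ Ioi (0 : ℝ)) => hasDerivAt_of_eq_integral_inv hp hppos hb hψ hx
  refine strictAntiOn_of_hasDerivWithinAt_neg (convex_Ioi 0) (f' := fun x => -(1 / p x))
    (fun x hx => (hψ' x hx).continuousAt.continuousWithinAt) (fun x hx => ?_) (fun x hx => ?_)
  · rw [interior_Ioi] at hx ⊢
    exact (hψ' x hx).hasDerivWithinAt
  · rw [interior_Ioi] at hx
    exact neg_neg_of_pos (one_div_pos.2 (hppos x hx))

theorem inv_zero_eq_of_eq_integral_inv (hp : ContinuousOn p (Ioi 0)) (hppos : ∀ x > 0, 0 < p x)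
    (hψ : ∀ x, ψ x = ∫ s in x..b, 1 / p s) (hψinv : ∀ y ≥ 0, ψinv y ∈ Ioc 0 b ∧ ψ (ψinv y) = y) :
    ψinv 0 = b := by
  have hb : 0 < b := (hψinv 0 le_rfl).1.1.trans_le (hψinv 0 le_rfl).1.2
  refine (strictAntiOn_of_eq_integral_inv hp hppos hb hψ).injOn (hψinv 0 le_rfl).1.1 hb ?_
  rw [(hψinv 0 le_rfl).2, hψ, intervalIntegral.integral_same]

theorem hasDerivWithinAt_inv_of_eq_integral_inv (hp : ContinuousOn p (Ioi 0))
    (hppos : ∀ x > 0, 0 < p x) (hψ : ∀ x, ψ x = ∫ s in x..b, 1 / p s)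
    (hψinv : ∀ y ≥ 0, ψinv y ∈ Ioc 0 b ∧ ψ (ψinv y) = y) {y : ℝ} (hy : 0 ≤ y) :
    HasDerivWithinAt ψinv (-p (ψinv y)) (Ici 0) y := by
  have hb : 0 < b := (hψinv 0 le_rfl).1.1.trans_le (hψinv 0 le_rfl).1.2
  have hcont : ContinuousOn ψinv (Ici 0) :=
    (strictAntiOn_of_eq_integral_inv hp hppos hb hψ).continuousOn_of_leftInvOn ordConnected_Ioi
      (fun y hy => (hψinv y hy).1.1) (fun y hy => (hψinv y hy).2)
  have hx := (hψinv y hy).1.1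
  simpa using (hasDerivAt_of_eq_integral_inv hp hppos hb hψ hx).hasDerivWithinAt_of_leftInvOn
    (hcont y hy) (neg_ne_zero.2 (one_div_pos.2 (hppos _ hx)).ne') hy (fun y hy => (hψinv y hy).2)

theorem hasDerivWithinAt_inv_comp_mul_of_eq_integral_inv (hp : ContinuousOn p (Ioi 0))
    (hppos : ∀ x > 0, 0 < p x) (hψ : ∀ x, ψ x = ∫ s in x..b, 1 / p s)
    (hψinv : ∀ y ≥ 0, ψinv y ∈ Ioc 0 b ∧ ψ (ψinv y) = y) {c t : ℝ} (hc : 0 ≤ c) (ht : 0 ≤ t) :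
    HasDerivWithinAt (fun t => ψinv (c * t)) (-(c * p (ψinv (c * t)))) (Ici 0) t := by
  have hmul : HasDerivWithinAt (c * ·) c (Ici 0) t := by
    simpa using (hasDerivWithinAt_id t _).const_mul c
  have := (hasDerivWithinAt_inv_of_eq_integral_inv hp hppos hψ hψinv
    (mul_nonneg hc ht)).comp t hmul fun s hs => mul_nonneg hc hs
  rwa [neg_mul, mul_comm] at this

end Profile

theorem forced_slope_lt_barrier_slope {p : ℝ → ℝ} {m c κ y s s' γ : ℝ}
    (hpmono : StrictMonoOn p (Ici 0)) (hppos : ∀ x > 0, 0 < p x)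
    (hphom : ∀ x ≥ 0, m * p κ * p x ≤ p (κ * x)) (hκ : 0 < κ)
    (hc : 0 ≤ c) (hκc : 0 ≤ m * p κ - κ * c - 1) (hy : 0 < y) (hγ : γ ≤ p y) (hys : κ * y < s)
    (hs' : s' + p s ≤ γ) : s' < κ * -(c * p y) := by
  set u := s / κ
  have hyu : y < u := (lt_div_iff₀' hκ).2 hys
  have hu : 0 < u := hy.trans hyu
  have hpyu : p y < p u := hpmono hy.le hu.le hyu
  have hps : m * p κ * p u ≤ p s := by
    simpa [u, mul_div_cancel₀ s hκ.ne'] using hphom u hu.le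
  linarith [mul_nonneg hκc (hppos u hu).le, mul_nonneg (mul_nonneg hκ.le hc) (sub_nonneg.2 hpyu.le)]

theorem stmt_2_general
    (p : ℝ → ℝ) (hpdiff : DifferentiableOn ℝ p (Ici 0))
    (hppos : ∀ x > (0:ℝ), 0 < p x) (hpmono : StrictMonoOn p (Ici 0))
    (m : ℝ)
    (hphom : ∀ K ≥ (1:ℝ), ∀ x ≥ (0:ℝ), m * p K * p x ≤ p (K * x))
    (Γ : ℝ → ℝ)
    (S S' : ℝ → ℝ)
    (hSder : ∀ t ≥ (0:ℝ), HasDerivAt S (S' t) t)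
    (hSineq : ∀ t ≥ (0:ℝ), S' t + p (S t) ≤ Γ t)
    (pinv : ℝ → ℝ)
    (hpinvΓ : ∀ t ≥ (0:ℝ), 0 ≤ pinv (Γ t) ∧ p (pinv (Γ t)) = Γ t)
    (c κ : ℝ) (hc : 0 < c) (hκ : 1 ≤ κ)
    (D : ℝ → ℝ)
    (hD : ∀ t ≥ (0:ℝ), HasDerivAt (fun s => pinv (Γ s)) (D t) t)
    (hDineq : ∀ t ≥ (0:ℝ), D t + c * Γ t < 0)
    (hκ1 : 0 ≤ m * p κ - κ * c - 1)
    (hκ2 : S 0 ≤ κ * pinv (Γ 0))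
    (ψ : ℝ → ℝ) (hψ : ∀ x, ψ x = ∫ s in x..(pinv (Γ 0)), 1 / p s)
    (ψinv : ℝ → ℝ)
    (hψinv : ∀ t ≥ (0:ℝ), ψinv t ∈ Ioc 0 (pinv (Γ 0)) ∧ ψ (ψinv t) = t) :
    ∀ t ≥ (0:ℝ), S t ≤ κ * ψinv (c * t) := by
  have hp : ContinuousOn p (Ioi 0) := hpdiff.continuousOn.mono Ioi_subset_Ici_self
  set Y := fun t => ψinv (c * t)
  have hYpos : ∀ t ≥ 0, 0 < Y t := fun t ht => (hψinv _ (mul_nonneg hc.le ht)).1.1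
  have hY0 : Y 0 = pinv (Γ 0) := by
    simpa [Y] using inv_zero_eq_of_eq_integral_inv hp hppos hψ hψinv
  have hY : ∀ t ∈ Ici 0, HasDerivWithinAt Y (-(c * p (Y t))) (Ici 0) t := fun t ht =>
    hasDerivWithinAt_inv_comp_mul_of_eq_integral_inv hp hppos hψ hψinv hc.le ht
  have hpinvY : ∀ t ∈ Ici 0, pinv (Γ t) ≤ Y t :=
    image_le_of_deriv_right_lt_deriv_boundary_Ici (fun t ht => (hD t ht).hasDerivWithinAt) hY
      hY0.ge fun t ht heq => by rw [← heq, (hpinvΓ t ht).2]; linarith [hDineq t ht]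
  have hΓY : ∀ t ≥ 0, Γ t ≤ p (Y t) := fun t ht =>
    (hpinvΓ t ht).2 ▸ hpmono.monotoneOn (hpinvΓ t ht).1 (hYpos t ht).le (hpinvY t ht)
  intro t ht
  refine le_of_forall_pos_le_add fun ε hε => ?_
  refine image_le_of_deriv_right_lt_deriv_boundary_Ici (B := fun t => κ * Y t + ε)
    (fun x hx => (hSder x hx).hasDerivWithinAt) (fun x hx => ((hY x hx).const_mul κ).add_const ε)
    (by simp only [hY0]; linarith) (fun x hx heq => ?_) t ht
  exact forced_slope_lt_barrier_slope hpmono hppos (hphom κ hκ) (by linarith) hc.le hκ1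
    (hYpos x hx) (hΓY x hx) (by linarith) (hSineq x hx)

/-- Forced decay, case (2a): fast-decaying forcing gives the unforced
decay rate ψ⁻¹(ct) up to the constant κ. -/
theorem stmt_2
    (p : ℝ → ℝ) (hpdiff : DifferentiableOn ℝ p (Ici 0))
    (hppos : ∀ x > (0:ℝ), 0 < p x) (hpmono : StrictMonoOn p (Ici 0))
    (m₁ η : ℝ) (hm₁ : 0 < m₁) (hη : 0 < η) (hη1 : η < 1)
    (hplin : ∀ x ∈ Icc (0:ℝ) η, p x ≤ m₁ * x)
    (m : ℝ) (hm : 0 < m)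
    (hphom : ∀ K ≥ (1:ℝ), ∀ x ≥ (0:ℝ), m * p K * p x ≤ p (K * x))
    (Γ : ℝ → ℝ) (hΓC1 : ContDiffOn ℝ 1 Γ (Ici 0)) (hΓpos : ∀ t ≥ (0:ℝ), 0 < Γ t)
    (S S' : ℝ → ℝ) (hS0 : 0 ≤ S 0) (hSnn : ∀ t ≥ (0:ℝ), 0 ≤ S t)
    (hSder : ∀ t ≥ (0:ℝ), HasDerivAt S (S' t) t)
    (hSineq : ∀ t ≥ (0:ℝ), S' t + p (S t) ≤ Γ t)
    (pinv : ℝ → ℝ) (hpinv : ∀ x ≥ (0:ℝ), pinv (p x) = x)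
    (hpinvΓ : ∀ t ≥ (0:ℝ), 0 ≤ pinv (Γ t) ∧ p (pinv (Γ t)) = Γ t)
    (c κ : ℝ) (hc : 0 < c) (hκ : 1 ≤ κ)
    (D : ℝ → ℝ)
    (hD : ∀ t ≥ (0:ℝ), HasDerivAt (fun s => pinv (Γ s)) (D t) t)
    (hDineq : ∀ t ≥ (0:ℝ), D t + c * Γ t < 0)
    (hκ1 : 0 ≤ m * p κ - κ * c - 1)
    (hκ2 : S 0 ≤ κ * pinv (Γ 0))
    (ψ : ℝ → ℝ) (hψ : ∀ x, ψ x = ∫ s in x..(pinv (Γ 0)), 1 / p s)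
    (ψinv : ℝ → ℝ)
    (hψinv : ∀ t ≥ (0:ℝ), ψinv t ∈ Ioc 0 (pinv (Γ 0)) ∧ ψ (ψinv t) = t) :
    ∀ t ≥ (0:ℝ), S t ≤ κ * ψinv (c * t) :=
  stmt_2_general p hpdiff hppos hpmono m hphom Γ S S' hSder hSineq pinv hpinvΓ c κ hc hκ D hD hDineq
    hκ1 hκ2 ψ hψ ψinv hψinv
end

section
/- Let p be a differentiable, positive, strictly increasing function on ℝ₊ satisfying p(Kx) ≥ m·p(K)·p(x) for some m > 0, all K ≥ 1, x ≥ 0. Let Γ ∈ C¹(ℝ₊) be positive, and suppose S satisfies S'(t) + p(S(t)) ≤ Γ(t), S(0) ≥ 0. Assume there exist c > 0 and κ ≥ 1 such that (d/dt)(p⁻¹(Γ(t))) + c·Γ(t) ≥ 0 for all t ≥ 0, m·p(κ) − c·κ − 1 ≥ 0, and κ·p⁻¹(Γ(0)) ≥ S(0). Then S(t) ≤ κ·p⁻¹(Γ(t)) for every t ≥ 0. -/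
/-!
The barrier `G = κ · p⁻¹ ∘ Γ` is a strict supersolution wherever `S` exceeds it: there
`p (S) > p (G) ≥ m p(κ) Γ ≥ (1 + cκ) Γ`, so `S' ≤ Γ - p(S) < -cκΓ ≤ G'`. A comparison
argument for differential inequalities then keeps `S` below `G`, since `S(0) ≤ G(0)`.
-/

open Set

theorem le_of_hasDerivAt_of_lt_imp_deriv_lt {f f' g g' : ℝ → ℝ} {a : ℝ}
    (hf : ∀ t ≥ a, HasDerivAt f (f' t) t) (hg : ∀ t ≥ a, HasDerivAt g (g' t) t)
    (ha : f a ≤ g a) (hlt : ∀ t ≥ a, g t < f t → f' t < g' t) :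
    ∀ t ≥ a, f t ≤ g t := by
  intro t ht
  refine le_of_forall_pos_le_add fun ε hε => ?_
  -- compare with `g + ε`, so that touching the bound means `g < f` strictly
  refine image_le_of_deriv_right_lt_deriv_boundary' (f' := f') (B' := g')
    (B := fun s => g s + ε) (fun x hx => (hf x hx.1).continuousAt.continuousWithinAt)
    (fun x hx => (hf x hx.1).hasDerivWithinAt) (by linarith)
    (fun x hx => ((hg x hx.1).add_const ε).continuousAt.continuousWithinAt)
    (fun x hx => ((hg x hx.1).add_const ε).hasDerivWithinAt)
    (fun x hx hfx => hlt x hx.1 (by linarith)) ⟨ht, le_rfl⟩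

theorem one_add_mul_mul_le_apply_mul {p : ℝ → ℝ} {m c κ y : ℝ}
    (hphom : ∀ K ≥ (1:ℝ), ∀ x ≥ (0:ℝ), m * p K * p x ≤ p (K * x))
    (hκ : 1 ≤ κ) (hκ1 : 0 ≤ m * p κ - c * κ - 1) (hy : 0 ≤ y) (hpy : 0 ≤ p y) :
    (1 + c * κ) * p y ≤ p (κ * y) :=
  calc (1 + c * κ) * p y ≤ m * p κ * p y := by gcongr; linarith
    _ ≤ p (κ * y) := hphom κ hκ y hy

theorem stmt_3_general
    (p : ℝ → ℝ)
    (hpmono : StrictMonoOn p (Ici 0))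
    (m : ℝ)
    (hphom : ∀ K ≥ (1:ℝ), ∀ x ≥ (0:ℝ), m * p K * p x ≤ p (K * x))
    (Γ : ℝ → ℝ) (hΓpos : ∀ t ≥ (0:ℝ), 0 < Γ t)
    (S S' : ℝ → ℝ)
    (hSder : ∀ t ≥ (0:ℝ), HasDerivAt S (S' t) t)
    (hSineq : ∀ t ≥ (0:ℝ), S' t + p (S t) ≤ Γ t)
    (pinv : ℝ → ℝ)
    (hpinvΓ : ∀ t ≥ (0:ℝ), 0 ≤ pinv (Γ t) ∧ p (pinv (Γ t)) = Γ t)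
    (c κ : ℝ) (hκ : 1 ≤ κ)
    (D : ℝ → ℝ)
    (hD : ∀ t ≥ (0:ℝ), HasDerivAt (fun s => pinv (Γ s)) (D t) t)
    (hDineq : ∀ t ≥ (0:ℝ), 0 ≤ D t + c * Γ t)
    (hκ1 : 0 ≤ m * p κ - c * κ - 1)
    (hκ2 : S 0 ≤ κ * pinv (Γ 0)) :
    ∀ t ≥ (0:ℝ), S t ≤ κ * pinv (Γ t) := by
  refine le_of_hasDerivAt_of_lt_imp_deriv_lt hSder (fun t ht => (hD t ht).const_mul κ) hκ2 ?_
  intro t ht hlt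
  obtain ⟨hy, hpy⟩ := hpinvΓ t ht
  have hG : 0 ≤ κ * pinv (Γ t) := mul_nonneg (by linarith) hy
  have hbarrier : (1 + c * κ) * Γ t ≤ p (κ * pinv (Γ t)) := by
    have := one_add_mul_mul_le_apply_mul hphom hκ hκ1 hy (hpy.symm ▸ (hΓpos t ht).le)
    rwa [hpy] at this
  have hpS : p (κ * pinv (Γ t)) < p (S t) := hpmono hG (hG.trans hlt.le) hlt
  have hD' : -(c * κ * Γ t) ≤ κ * D t := by nlinarith [hDineq t ht]
  linarith [hSineq t ht]

/-- Forced decay, case (2b): slowly decaying forcing dictates the decay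
rate p⁻¹ ∘ Γ. -/
theorem stmt_3
    (p : ℝ → ℝ) (hpdiff : DifferentiableOn ℝ p (Ici 0))
    (hppos : ∀ x > (0:ℝ), 0 < p x) (hpmono : StrictMonoOn p (Ici 0))
    (m : ℝ) (hm : 0 < m)
    (hphom : ∀ K ≥ (1:ℝ), ∀ x ≥ (0:ℝ), m * p K * p x ≤ p (K * x))
    (Γ : ℝ → ℝ) (hΓC1 : ContDiffOn ℝ 1 Γ (Ici 0)) (hΓpos : ∀ t ≥ (0:ℝ), 0 < Γ t)
    (S S' : ℝ → ℝ) (hS0 : 0 ≤ S 0) (hSnn : ∀ t ≥ (0:ℝ), 0 ≤ S t)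
    (hSder : ∀ t ≥ (0:ℝ), HasDerivAt S (S' t) t)
    (hSineq : ∀ t ≥ (0:ℝ), S' t + p (S t) ≤ Γ t)
    (pinv : ℝ → ℝ) (hpinv : ∀ x ≥ (0:ℝ), pinv (p x) = x)
    (hpinvΓ : ∀ t ≥ (0:ℝ), 0 ≤ pinv (Γ t) ∧ p (pinv (Γ t)) = Γ t)
    (c κ : ℝ) (hc : 0 < c) (hκ : 1 ≤ κ)
    (D : ℝ → ℝ)
    (hD : ∀ t ≥ (0:ℝ), HasDerivAt (fun s => pinv (Γ s)) (D t) t)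
    (hDineq : ∀ t ≥ (0:ℝ), 0 ≤ D t + c * Γ t)
    (hκ1 : 0 ≤ m * p κ - c * κ - 1)
    (hκ2 : S 0 ≤ κ * pinv (Γ 0)) :
    ∀ t ≥ (0:ℝ), S t ≤ κ * pinv (Γ t) :=
  stmt_3_general p hpmono m hphom Γ hΓpos S S' hSder hSineq pinv hpinvΓ c κ hκ D hD hDineq hκ1 hκ2
end

section
/- Let T > 0, Γ ∈ L¹_loc(ℝ₊) nonnegative, δ(t) = ∫ₜ^{t+T} Γ(s) ds, and let W : ℝ₊ → ℝ₊ be continuous with W(t) ≤ α(t−s)[W(s) + ∫ₛᵗ Γ(σ) dσ] for all t ≥ s ≥ 0, where α is positive, monotone increasing. Suppose ℓ : ℝ₊ → ℝ is increasing, ℓ(0) = 0, I − ℓ is increasing, and W((m+1)T) + ℓ(W(mT) + δ(mT)) ≤ W(mT) + δ(mT) for all m ∈ ℕ. Let S solve S'(t) + (1/T)ℓ(S(t)) = Γ(t), S(0) = W(0). Then W(t) ≤ α(T)(S(t−T) + 2∫_{t−T}^{t} Γ(s) ds) for all t ≥ T. -/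
open MeasureTheory Set

/-!
Between two grid points the solution `S` of the forced ODE grows by at most `∫ Γ`, while over a
whole period it loses at most `ℓ (S (mT) + δ (mT))`, because `ℓ (S τ) ≤ ℓ (S (mT) + δ (mT))` for
`τ ∈ [mT, mT + T]`. As `I - ℓ` is monotone, the discrete dissipation inequality for `W` then
propagates `W (mT) ≤ S (mT)` from `m` to `m + 1`. For `t ≥ T` pick a grid point
`mT ∈ [t - T, t]` and combine the local growth bound for `W` on `[mT, t]` with the growth bound
for `S` on `[t - T, mT]`.
-/

section DerivBounds

variable {f f' φ : ℝ → ℝ} {a b : ℝ}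

theorem sub_le_integral_of_hasDerivAt_of_le (hab : a ≤ b)
    (hf : ∀ x ∈ Icc a b, HasDerivAt f (f' x) x) (hφ : IntegrableOn φ (Icc a b))
    (hle : ∀ x ∈ Ioo a b, f' x ≤ φ x) : f b - f a ≤ ∫ x in a..b, φ x :=
  intervalIntegral.sub_le_integral_of_hasDeriv_right_of_le hab
    (fun x hx => (hf x hx).continuousAt.continuousWithinAt)
    (fun x hx => (hf x (Ioo_subset_Icc_self hx)).hasDerivWithinAt) hφ hle

theorem integral_le_sub_of_hasDerivAt_of_le (hab : a ≤ b)
    (hf : ∀ x ∈ Icc a b, HasDerivAt f (f' x) x) (hφ : IntegrableOn φ (Icc a b))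
    (hle : ∀ x ∈ Ioo a b, φ x ≤ f' x) : ∫ x in a..b, φ x ≤ f b - f a :=
  intervalIntegral.integral_le_sub_of_hasDeriv_right_of_le hab
    (fun x hx => (hf x hx).continuousAt.continuousWithinAt)
    (fun x hx => (hf x (Ioo_subset_Icc_self hx)).hasDerivWithinAt) hφ hle

end DerivBounds

theorem le_of_dissipation_comparison {w s d : ℕ → ℝ} {ℓ : ℝ → ℝ}
    (hIℓ : MonotoneOn (fun x => x - ℓ x) (Ici 0))
    (hw : ∀ m, w (m + 1) + ℓ (w m + d m) ≤ w m + d m)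
    (hs : ∀ m, s m + d m - ℓ (s m + d m) ≤ s (m + 1))
    (hwd : ∀ m, 0 ≤ w m + d m) (h0 : w 0 ≤ s 0) (m : ℕ) : w m ≤ s m := by
  induction m with
  | zero => exact h0
  | succ m ih =>
    have hsd : 0 ≤ s m + d m := (hwd m).trans (by linarith)
    have := hIℓ (mem_Ici.2 (hwd m)) (mem_Ici.2 hsd) (by linarith)
    linarith [hw m, hs m]

theorem exists_nat_mul_mem_Icc {x T : ℝ} (hx : 0 ≤ x) (hT : 0 < T) :
    ∃ m : ℕ, x ≤ m * T ∧ m * T ≤ x + T := by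
  refine ⟨⌈x / T⌉₊, (div_le_iff₀ hT).1 (Nat.le_ceil _), ?_⟩
  have := (Nat.ceil_lt_add_one (div_nonneg hx hT.le)).le
  calc (⌈x / T⌉₊ : ℝ) * T ≤ (x / T + 1) * T := by gcongr
    _ = x + T := by field_simp

section ForcedODE

variable {T : ℝ} {Γ ℓ S : ℝ → ℝ} {a b : ℝ}

theorem MeasureTheory.LocallyIntegrableOn.integrableOn_Icc {c : ℝ}
    (hΓ : LocallyIntegrableOn Γ (Ici c)) (ha : c ≤ a) : IntegrableOn Γ (Icc a b) :=
  hΓ.integrableOn_compact_subset (fun _ hx => ha.trans hx.1) isCompact_Icc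

theorem integral_nonneg_of_nonneg_on_Ici (hΓnn : ∀ t ≥ (0:ℝ), 0 ≤ Γ t) (ha : 0 ≤ a)
    (hab : a ≤ b) : 0 ≤ ∫ s in a..b, Γ s :=
  intervalIntegral.integral_nonneg hab fun x hx => hΓnn x (ha.trans hx.1)

theorem integral_mono_interval_of_nonneg (hΓ : LocallyIntegrableOn Γ (Ici 0))
    (hΓnn : ∀ t ≥ (0:ℝ), 0 ≤ Γ t) {c d : ℝ} (hc : 0 ≤ c) (hca : c ≤ a) (hab : a ≤ b)
    (hbd : b ≤ d) : ∫ s in a..b, Γ s ≤ ∫ s in c..d, Γ s :=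
  intervalIntegral.integral_mono_interval hca hab hbd
    (ae_restrict_of_forall_mem measurableSet_Ioc fun x hx => hΓnn x (hc.trans hx.1.le))
    ((intervalIntegrable_iff_integrableOn_Icc_of_le (hca.trans (hab.trans hbd))).2
      (hΓ.integrableOn_Icc hc))

theorem forced_ode_sub_le_integral (hT : 0 < T) (hℓnn : ∀ s ≥ (0:ℝ), 0 ≤ ℓ s)
    (hΓ : LocallyIntegrableOn Γ (Ici 0)) (hSnn : ∀ t ≥ (0:ℝ), 0 ≤ S t)
    (hS : ∀ t ≥ (0:ℝ), HasDerivAt S (Γ t - (1 / T) * ℓ (S t)) t) (ha : 0 ≤ a) (hab : a ≤ b) :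
    S b - S a ≤ ∫ s in a..b, Γ s := by
  refine sub_le_integral_of_hasDerivAt_of_le hab (fun x hx => hS x (ha.trans hx.1))
    (hΓ.integrableOn_Icc ha) fun x hx => ?_
  have := hℓnn _ (hSnn x (ha.trans hx.1.le))
  have : 0 ≤ 1 / T * ℓ (S x) := by positivity
  linarith

theorem forced_ode_lower_bound_over_period (hT : 0 < T) (hℓmono : MonotoneOn ℓ (Ici 0))
    (hℓnn : ∀ s ≥ (0:ℝ), 0 ≤ ℓ s) (hΓ : LocallyIntegrableOn Γ (Ici 0))
    (hΓnn : ∀ t ≥ (0:ℝ), 0 ≤ Γ t) (hSnn : ∀ t ≥ (0:ℝ), 0 ≤ S t)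
    (hS : ∀ t ≥ (0:ℝ), HasDerivAt S (Γ t - (1 / T) * ℓ (S t)) t) (ha : 0 ≤ a) :
    S a + (∫ s in a..a + T, Γ s) - ℓ (S a + ∫ s in a..a + T, Γ s) ≤ S (a + T) := by
  set δ := ∫ s in a..a + T, Γ s
  have hδ : 0 ≤ δ := integral_nonneg_of_nonneg_on_Ici hΓnn ha (by linarith)
  have hφ : IntegrableOn (fun x => Γ x - 1 / T * ℓ (S a + δ)) (Icc a (a + T)) :=
    (hΓ.integrableOn_Icc ha).sub (integrableOn_const (by simp))
  have hloss := integral_le_sub_of_hasDerivAt_of_le (by linarith)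
    (fun x hx => hS x (ha.trans hx.1)) hφ fun x hx => by
      have hSx : S x ≤ S a + δ := by
        have := forced_ode_sub_le_integral hT hℓnn hΓ hSnn hS ha hx.1.le
        have := integral_mono_interval_of_nonneg hΓ hΓnn ha le_rfl hx.1.le hx.2.le
        linarith
      have := hℓmono (hSnn x (ha.trans hx.1.le)) (add_nonneg (hSnn a ha) hδ) hSx
      gcongr
  rw [intervalIntegral.integral_sub ((intervalIntegrable_iff_integrableOn_Icc_of_le
      (by linarith)).2 (hΓ.integrableOn_Icc ha)) intervalIntegrable_const,
    intervalIntegral.integral_const, smul_eq_mul, add_sub_cancel_left,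
    ← mul_assoc, mul_one_div_cancel hT.ne', one_mul] at hloss
  linarith

end ForcedODE

theorem stmt_4_general
    (T : ℝ) (hT : 0 < T)
    (Γ : ℝ → ℝ) (hΓloc : LocallyIntegrableOn Γ (Ici 0))
    (hΓnn : ∀ t ≥ (0:ℝ), 0 ≤ Γ t)
    (W : ℝ → ℝ) (hWnn : ∀ t ≥ (0:ℝ), 0 ≤ W t)
    (α : ℝ → ℝ) (hαpos : ∀ s ≥ (0:ℝ), 0 < α s) (hαmono : MonotoneOn α (Ici 0))
    (hW : ∀ s t : ℝ, 0 ≤ s → s ≤ t → W t ≤ α (t - s) * (W s + ∫ σ in s..t, Γ σ))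
    (ℓ : ℝ → ℝ) (hℓmono : MonotoneOn ℓ (Ici 0)) (hℓ0 : ℓ 0 = 0)
    (hIℓ : MonotoneOn (fun s => s - ℓ s) (Ici 0))
    (hdisc : ∀ m : ℕ, W ((m + 1) * T) + ℓ (W (m * T) + ∫ s in (m * T)..(m * T + T), Γ s)
        ≤ W (m * T) + ∫ s in (m * T)..(m * T + T), Γ s)
    (S : ℝ → ℝ) (hS0 : S 0 = W 0) (hSnn : ∀ t ≥ (0:ℝ), 0 ≤ S t)
    (hS : ∀ t ≥ (0:ℝ), HasDerivAt S (Γ t - (1 / T) * ℓ (S t)) t) :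
    ∀ t ≥ T, W t ≤ α T * (S (t - T) + 2 * ∫ s in (t - T)..t, Γ s) := by
  have hℓnn : ∀ s ≥ (0:ℝ), 0 ≤ ℓ s := fun s hs => hℓ0 ▸ hℓmono self_mem_Ici hs hs
  have hgrid0 (m : ℕ) : 0 ≤ (m : ℝ) * T := by positivity
  have hgrid (m : ℕ) : W (m * T) ≤ S (m * T) := by
    refine le_of_dissipation_comparison (w := fun m : ℕ => W (m * T)) (s := fun m : ℕ => S (m * T))
      (d := fun m : ℕ => ∫ s in (m * T)..(m * T + T), Γ s) hIℓ (fun m => ?_) (fun m => ?_)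
      (fun m => ?_) (by simpa using hS0.ge) m
    · simpa using hdisc m
    · simpa [add_mul] using forced_ode_lower_bound_over_period hT hℓmono hℓnn hΓloc hΓnn hSnn hS (hgrid0 m)
    · exact add_nonneg (hWnn _ (hgrid0 m))
        (integral_nonneg_of_nonneg_on_Ici hΓnn (hgrid0 m) (by linarith))
  intro t ht
  have htT : 0 ≤ t - T := sub_nonneg.2 ht
  obtain ⟨m, hm, hmt⟩ := exists_nat_mul_mem_Icc htT hT
  rw [sub_add_cancel] at hmt
  have hS_growth := forced_ode_sub_le_integral hT hℓnn hΓloc hSnn hS htT hm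
  have hleft := integral_mono_interval_of_nonneg hΓloc hΓnn htT le_rfl hm hmt
  have hright := integral_mono_interval_of_nonneg hΓloc hΓnn htT hm hmt le_rfl
  have hα : α (t - m * T) ≤ α T := hαmono (sub_nonneg.2 hmt) hT.le (by linarith)
  calc W t ≤ α (t - m * T) * (W (m * T) + ∫ s in (m * T)..t, Γ s) := hW _ _ (hgrid0 m) hmt
    _ ≤ α T * (S (m * T) + ∫ s in (m * T)..t, Γ s) :=
      mul_le_mul hα (add_le_add_left (hgrid m) _)
        (add_nonneg (hWnn _ (hgrid0 m)) (integral_nonneg_of_nonneg_on_Ici hΓnn (hgrid0 m) hmt))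
        (hαpos T hT.le).le
    _ ≤ α T * (S (t - T) + 2 * ∫ s in (t - T)..t, Γ s) :=
      mul_le_mul_of_nonneg_left (by linarith) (hαpos T hT.le).le

/-- Generalized Lasiecka–Tataru comparison lemma in the non-autonomous
setting. -/
theorem stmt_4
    (T : ℝ) (hT : 0 < T)
    (Γ : ℝ → ℝ) (hΓloc : LocallyIntegrableOn Γ (Ici 0))
    (hΓnn : ∀ t ≥ (0:ℝ), 0 ≤ Γ t)
    (W : ℝ → ℝ) (hWcont : ContinuousOn W (Ici 0)) (hWnn : ∀ t ≥ (0:ℝ), 0 ≤ W t)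
    (α : ℝ → ℝ) (hαpos : ∀ s ≥ (0:ℝ), 0 < α s) (hαmono : MonotoneOn α (Ici 0))
    (hW : ∀ s t : ℝ, 0 ≤ s → s ≤ t → W t ≤ α (t - s) * (W s + ∫ σ in s..t, Γ σ))
    (ℓ : ℝ → ℝ) (hℓmono : MonotoneOn ℓ (Ici 0)) (hℓ0 : ℓ 0 = 0)
    (hIℓ : MonotoneOn (fun s => s - ℓ s) (Ici 0))
    (hdisc : ∀ m : ℕ, W ((m + 1) * T) + ℓ (W (m * T) + ∫ s in (m * T)..(m * T + T), Γ s)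
        ≤ W (m * T) + ∫ s in (m * T)..(m * T + T), Γ s)
    (S : ℝ → ℝ) (hS0 : S 0 = W 0) (hSnn : ∀ t ≥ (0:ℝ), 0 ≤ S t)
    (hS : ∀ t ≥ (0:ℝ), HasDerivAt S (Γ t - (1 / T) * ℓ (S t)) t) :
    ∀ t ≥ T, W t ≤ α T * (S (t - T) + 2 * ∫ s in (t - T)..t, Γ s) :=
  stmt_4_general T hT Γ hΓloc hΓnn W hWnn α hαpos hαmono hW ℓ hℓmono hℓ0 hIℓ hdisc S hS0 hSnn hS
end

section
/- Under the hypotheses of the generalized Lasiecka–Tataru lemma, if W(mT) ≤ S(mT), where S solves S' + (1/T)ℓ(S) = Γ with S(0) = W(0), then W((m+1)T) ≤ S((m+1)T). In particular, by induction W(mT) ≤ S(mT) for all m ∈ ℕ. -/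
/-!
On `[a, a + T]` the solution `S` of `S' = Γ - ℓ(S)/T` never grows faster than `Γ` because
`ℓ ≥ 0`, so `S ≤ S(a) + δ` there with `δ = ∫ₐ^{a+T} Γ`. As `ℓ` is monotone,
`S' ≥ Γ - ℓ(S(a) + δ)/T`, and integrating gives `S(a + T) ≥ (I - ℓ)(S(a) + δ)`.
The discrete inequality says `W(a + T) ≤ (I - ℓ)(W(a) + δ)`, and monotonicity of `I - ℓ`
closes the induction step.
-/

open MeasureTheory Set

section ComparisonStep

variable {Γ ℓ S : ℝ → ℝ} {k a b : ℝ}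

theorem le_add_integral_of_hasDerivAt_sub_mul (hab : a ≤ b) (hΓ : IntegrableOn Γ (Icc a b))
    (hk : 0 ≤ k) (hℓS : ∀ t ∈ Icc a b, 0 ≤ ℓ (S t))
    (hS : ∀ t ∈ Icc a b, HasDerivAt S (Γ t - k * ℓ (S t)) t) :
    S b ≤ S a + ∫ t in a..b, Γ t := by
  have hle := intervalIntegral.sub_le_integral_of_hasDeriv_right_of_le hab
    (fun t ht => (hS t ht).continuousAt.continuousWithinAt)
    (fun t ht => (hS t (Ioo_subset_Icc_self ht)).hasDerivWithinAt) hΓ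
    (fun t ht => sub_le_self _ (mul_nonneg hk (hℓS t (Ioo_subset_Icc_self ht))))
  linarith

theorem add_integral_sub_le_of_hasDerivAt_sub_mul (hab : a ≤ b)
    (hΓ : IntegrableOn Γ (Icc a b)) (hΓnn : ∀ t ∈ Icc a b, 0 ≤ Γ t) (hk : 0 ≤ k)
    (hℓmono : MonotoneOn ℓ (Ici 0)) (hℓnn : ∀ x ≥ (0 : ℝ), 0 ≤ ℓ x)
    (hSnn : ∀ t ∈ Icc a b, 0 ≤ S t)
    (hS : ∀ t ∈ Icc a b, HasDerivAt S (Γ t - k * ℓ (S t)) t) :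
    S a + (∫ t in a..b, Γ t) - k * (b - a) * ℓ (S a + ∫ t in a..b, Γ t) ≤ S b := by
  set δ := ∫ t in a..b, Γ t
  have hΓi : IntervalIntegrable Γ volume a b :=
    (intervalIntegrable_iff_integrableOn_Icc_of_le hab).2 hΓ
  have hS_le : ∀ t ∈ Icc a b, S t ≤ S a + δ := fun t ht => calc
    S t ≤ S a + ∫ u in a..t, Γ u :=
      le_add_integral_of_hasDerivAt_sub_mul ht.1 (hΓ.mono_set (Icc_subset_Icc_right ht.2)) hk
        (fun u hu => hℓnn _ (hSnn u ⟨hu.1, hu.2.trans ht.2⟩))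
        (fun u hu => hS u ⟨hu.1, hu.2.trans ht.2⟩)
    _ ≤ S a + δ := by
      gcongr
      refine intervalIntegral.integral_mono_interval le_rfl ht.1 ht.2 ?_ hΓi
      filter_upwards [ae_restrict_mem measurableSet_Ioc] with u hu
      exact hΓnn u (Ioc_subset_Icc_self hu)
  have hδnn : 0 ≤ δ := intervalIntegral.integral_nonneg hab hΓnn
  have hge := intervalIntegral.integral_le_sub_of_hasDeriv_right_of_le
    (φ := fun t => Γ t - k * ℓ (S a + δ)) hab
    (fun t ht => (hS t ht).continuousAt.continuousWithinAt)
    (fun t ht => (hS t (Ioo_subset_Icc_self ht)).hasDerivWithinAt)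
    (hΓ.sub (integrableOn_const measure_Icc_lt_top.ne)) fun t ht => by
      have ht' := Ioo_subset_Icc_self ht
      have hℓS :=
        hℓmono (hSnn t ht') (add_nonneg (hSnn a ⟨le_rfl, hab⟩) hδnn) (hS_le t ht')
      gcongr
  rw [intervalIntegral.integral_sub hΓi intervalIntegrable_const,
    intervalIntegral.integral_const, smul_eq_mul] at hge
  linarith

end ComparisonStep

theorem stmt_5_general
    (T : ℝ) (hT : 0 < T)
    (Γ : ℝ → ℝ) (hΓloc : LocallyIntegrableOn Γ (Ici 0))
    (hΓnn : ∀ t ≥ (0:ℝ), 0 ≤ Γ t)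
    (W : ℝ → ℝ) (hWnn : ∀ t ≥ (0:ℝ), 0 ≤ W t)
    (ℓ : ℝ → ℝ) (hℓmono : MonotoneOn ℓ (Ici 0)) (hℓ0 : ℓ 0 = 0)
    (hIℓ : MonotoneOn (fun s => s - ℓ s) (Ici 0))
    (hdisc : ∀ m : ℕ, W ((m + 1) * T) + ℓ (W (m * T) + ∫ s in (m * T)..(m * T + T), Γ s)
        ≤ W (m * T) + ∫ s in (m * T)..(m * T + T), Γ s)
    (S : ℝ → ℝ) (hS0 : S 0 = W 0) (hSnn : ∀ t ≥ (0:ℝ), 0 ≤ S t)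
    (hS : ∀ t ≥ (0:ℝ), HasDerivAt S (Γ t - (1 / T) * ℓ (S t)) t) :
    (∀ m : ℕ, W (m * T) ≤ S (m * T) → W ((m + 1) * T) ≤ S ((m + 1) * T)) ∧
      (∀ m : ℕ, W (m * T) ≤ S (m * T)) := by
  have hℓnn : ∀ x ≥ (0 : ℝ), 0 ≤ ℓ x := fun x hx => hℓ0 ▸ hℓmono self_mem_Ici hx hx
  have step (m : ℕ) (hm : W (m * T) ≤ S (m * T)) : W ((m + 1) * T) ≤ S ((m + 1) * T) := by
    have hd := hdisc m
    rw [add_one_mul] at hd ⊢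
    set a : ℝ := m * T
    have ha : 0 ≤ a := by positivity
    have hsub : Icc a (a + T) ⊆ Ici 0 := fun t ht => ha.trans ht.1
    set δ := ∫ s in a..a + T, Γ s
    have hδnn : 0 ≤ δ :=
      intervalIntegral.integral_nonneg (by linarith) fun t ht => hΓnn t (hsub ht)
    have hSstep := add_integral_sub_le_of_hasDerivAt_sub_mul (le_add_of_nonneg_right hT.le)
      (hΓloc.integrableOn_compact_subset hsub isCompact_Icc) (fun t ht => hΓnn t (hsub ht))
      (one_div_nonneg.2 hT.le) hℓmono hℓnn (fun t ht => hSnn t (hsub ht))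
      fun t ht => hS t (hsub ht)
    have hI := hIℓ (add_nonneg (hWnn a ha) hδnn) (add_nonneg (hSnn a ha) hδnn) (by linarith)
    rw [add_sub_cancel_left, one_div_mul_cancel hT.ne', one_mul] at hSstep
    dsimp only at hI
    linarith
  refine ⟨step, fun m => ?_⟩
  induction m with
  | zero => simpa using hS0.ge
  | succ n ih => exact_mod_cast step n ih

/-- Induction step of the generalized Lasiecka–Tataru comparison lemma:
W(mT) ≤ S(mT) implies W((m+1)T) ≤ S((m+1)T); hence W(mT) ≤ S(mT) for all m. -/
theorem stmt_5
    (T : ℝ) (hT : 0 < T)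
    (Γ : ℝ → ℝ) (hΓloc : LocallyIntegrableOn Γ (Ici 0))
    (hΓnn : ∀ t ≥ (0:ℝ), 0 ≤ Γ t)
    (W : ℝ → ℝ) (hWcont : ContinuousOn W (Ici 0)) (hWnn : ∀ t ≥ (0:ℝ), 0 ≤ W t)
    (ℓ : ℝ → ℝ) (hℓmono : MonotoneOn ℓ (Ici 0)) (hℓ0 : ℓ 0 = 0)
    (hIℓ : MonotoneOn (fun s => s - ℓ s) (Ici 0))
    (hdisc : ∀ m : ℕ, W ((m + 1) * T) + ℓ (W (m * T) + ∫ s in (m * T)..(m * T + T), Γ s)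
        ≤ W (m * T) + ∫ s in (m * T)..(m * T + T), Γ s)
    (S : ℝ → ℝ) (hS0 : S 0 = W 0) (hSnn : ∀ t ≥ (0:ℝ), 0 ≤ S t)
    (hS : ∀ t ≥ (0:ℝ), HasDerivAt S (Γ t - (1 / T) * ℓ (S t)) t) :
    (∀ m : ℕ, W (m * T) ≤ S (m * T) → W ((m + 1) * T) ≤ S ((m + 1) * T)) ∧
      (∀ m : ℕ, W (m * T) ≤ S (m * T)) :=
  stmt_5_general T hT Γ hΓloc hΓnn W hWnn ℓ hℓmono hℓ0 hIℓ hdisc S hS0 hSnn hS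
end

section
/- Suppose S is absolutely continuous with S(0) > 0 and satisfies S'(t) + C·S(t)^{(1+r₀)/(2r₀)} ≤ Γ(t) for constants C > 0, r₀ ∈ (0,1), where Γ(t) ≤ M(1+t)^{−θ} with 1 < θ ≤ (1+r₀)/(1−r₀). Then there exists c > 0 such that S(t) ≤ c·(1+t)^{−2r₀θ/(1+r₀)} for all t ≥ 0. -/
/-!
Comparison with the barrier `φ t = c (1 + t)^(-α)`, where `α = 2 r₀ θ / (1 + r₀)` is chosen so
that `φ ^ p` with `p = (1 + r₀) / (2 r₀)` decays exactly like the forcing `(1 + t)^(-θ)`.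
The condition `θ ≤ (1 + r₀) / (1 - r₀)` means `θ ≤ α + 1`, so `|φ'|` decays at least as fast as
the forcing; taking `c` large enough that `α c + M < C c ^ p`, the absorption term `C φ ^ p`
dominates both, hence `S` can never cross `φ` from below.
-/

open Real Set Filter

lemma eventually_mul_add_lt_mul_rpow {C p : ℝ} (α M : ℝ) (hC : 0 < C) (hp : 1 < p) :
    ∀ᶠ c in atTop, α * c + M < C * c ^ p := by
  have hgrowth : Tendsto (fun c : ℝ => c * (C * c ^ (p - 1) - α)) atTop atTop :=
    tendsto_id.atTop_mul_atTop₀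
      (tendsto_atTop_add_const_right _ _ ((tendsto_rpow_atTop (by linarith)).const_mul_atTop hC))
  filter_upwards [hgrowth.eventually_gt_atTop M, eventually_gt_atTop 0] with c hc hc0
  have hcp : c * c ^ (p - 1) = c ^ p := by
    rw [mul_comm, ← rpow_add_one hc0.ne', sub_add_cancel]
  linear_combination hc + C * hcp

lemma hasDerivAt_mul_one_add_rpow_neg (c α : ℝ) {x : ℝ} (hx : 0 < 1 + x) :
    HasDerivAt (fun t => c * (1 + t) ^ (-α)) (-(α * c) * (1 + x) ^ (-α - 1)) x := by
  have hbase : HasDerivAt (fun t : ℝ => 1 + t) 1 x := (hasDerivAt_id x).const_add 1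
  exact (((hasDerivAt_rpow_const (Or.inl hx.ne')).comp x hbase).const_mul c).congr_deriv (by ring)

lemma deriv_lt_of_eq_barrier {C p α θ M c x s s' : ℝ} (hα : 0 ≤ α) (hαp : α * p = θ)
    (hθα : θ ≤ α + 1) (hc : 0 ≤ c) (hcM : α * c + M < C * c ^ p) (hx : 0 ≤ x)
    (hs : s = c * (1 + x) ^ (-α)) (hineq : s' + C * s ^ p ≤ M * (1 + x) ^ (-θ)) :
    s' < -(α * c) * (1 + x) ^ (-α - 1) := by
  have hx1 : 0 < 1 + x := by linarith
  have hsp : s ^ p = c ^ p * (1 + x) ^ (-θ) := by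
    rw [hs, mul_rpow hc (rpow_nonneg hx1.le _), ← rpow_mul hx1.le, ← hαp, neg_mul]
  have hdecay : (1 + x) ^ (-α - 1) ≤ (1 + x) ^ (-θ) :=
    rpow_le_rpow_of_exponent_le (by linarith) (by linarith)
  have hforce : 0 < (1 + x) ^ (-θ) := rpow_pos_of_pos hx1 _
  rw [hsp] at hineq
  nlinarith [mul_le_mul_of_nonneg_left hdecay (mul_nonneg hα hc)]

lemma le_mul_one_add_rpow_neg_of_deriv_add_rpow_le {S S' : ℝ → ℝ} {C p α θ M c : ℝ}
    (hα : 0 ≤ α) (hαp : α * p = θ) (hθα : θ ≤ α + 1) (hc : 0 ≤ c) (hcM : α * c + M < C * c ^ p)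
    (hS0 : S 0 ≤ c) (hSder : ∀ t ≥ (0 : ℝ), HasDerivAt S (S' t) t)
    (hineq : ∀ t ≥ (0 : ℝ), S' t + C * S t ^ p ≤ M * (1 + t) ^ (-θ)) :
    ∀ t ≥ (0 : ℝ), S t ≤ c * (1 + t) ^ (-α) := by
  intro T hT
  have hbarrier : ∀ x ∈ Ici (0 : ℝ),
      HasDerivAt (fun t => c * (1 + t) ^ (-α)) (-(α * c) * (1 + x) ^ (-α - 1)) x :=
    fun x hx => hasDerivAt_mul_one_add_rpow_neg c α (by linarith [mem_Ici.mp hx])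
  refine image_le_of_deriv_right_lt_deriv_boundary'
    (fun x hx => (hSder x hx.1).continuousAt.continuousWithinAt)
    (fun x hx => (hSder x hx.1).hasDerivWithinAt) (by simpa using hS0)
    (fun x hx => (hbarrier x hx.1).continuousAt.continuousWithinAt)
    (fun x hx => (hbarrier x hx.1).hasDerivWithinAt)
    (fun x hx hSx => deriv_lt_of_eq_barrier hα hαp hθα hc hcM hx.1 hSx (hineq x hx.1))
    (right_mem_Icc.mpr hT)

theorem stmt_15_general
    (C r₀ M θ : ℝ) (hC : 0 < C) (hr₀ : 0 < r₀) (hr₀1 : r₀ < 1)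
    (hθ1 : 1 < θ) (hθ2 : θ ≤ (1 + r₀) / (1 - r₀))
    (S S' Γ : ℝ → ℝ)
    (hSder : ∀ t ≥ (0:ℝ), HasDerivAt S (S' t) t)
    (hΓ : ∀ t ≥ (0:ℝ), Γ t ≤ M * (1 + t) ^ (-θ))
    (hineq : ∀ t ≥ (0:ℝ), S' t + C * S t ^ ((1 + r₀) / (2 * r₀)) ≤ Γ t) :
    ∃ c > (0:ℝ), ∀ t ≥ (0:ℝ), S t ≤ c * (1 + t) ^ (-(2 * r₀ * θ / (1 + r₀))) := by
  set p := (1 + r₀) / (2 * r₀)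
  set α := 2 * r₀ * θ / (1 + r₀)
  have hp : 1 < p := by rw [one_lt_div (by positivity)]; linarith
  have hα : 0 ≤ α := by positivity
  have hαp : α * p = θ := by simp only [α, p]; field_simp
  have hθα : θ ≤ α + 1 := by
    rw [le_div_iff₀ (by linarith)] at hθ2
    have h1r₀ : 0 < 1 + r₀ := by linarith
    rw [div_add_one h1r₀.ne', le_div_iff₀ h1r₀]
    linarith
  obtain ⟨c, hcS0, hc, hcM⟩ := ((eventually_ge_atTop (S 0)).and ((eventually_gt_atTop 0).and
    (eventually_mul_add_lt_mul_rpow α M hC hp))).exists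
  exact ⟨c, hc, le_mul_one_add_rpow_neg_of_deriv_add_rpow_le hα hαp hθα hc.le hcM hcS0 hSder
    fun t ht => (hineq t ht).trans (hΓ t ht)⟩

/-- Sublinear damping application, case 1 < θ ≤ (1+r₀)/(1-r₀):
polynomial decay at rate (1+t)^{-2r₀θ/(1+r₀)}. -/
theorem stmt_15
    (C r₀ M θ : ℝ) (hC : 0 < C) (hr₀ : 0 < r₀) (hr₀1 : r₀ < 1) (hM : 0 < M)
    (hθ1 : 1 < θ) (hθ2 : θ ≤ (1 + r₀) / (1 - r₀))
    (S S' Γ : ℝ → ℝ) (hS0 : 0 < S 0) (hSnn : ∀ t ≥ (0:ℝ), 0 ≤ S t)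
    (hSder : ∀ t ≥ (0:ℝ), HasDerivAt S (S' t) t)
    (hΓ : ∀ t ≥ (0:ℝ), Γ t ≤ M * (1 + t) ^ (-θ))
    (hineq : ∀ t ≥ (0:ℝ), S' t + C * S t ^ ((1 + r₀) / (2 * r₀)) ≤ Γ t) :
    ∃ c > (0:ℝ), ∀ t ≥ (0:ℝ), S t ≤ c * (1 + t) ^ (-(2 * r₀ * θ / (1 + r₀))) :=
  stmt_15_general C r₀ M θ hC hr₀ hr₀1 hθ1 hθ2 S S' Γ hSder hΓ hineq
end
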